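/- If S is a Von Neumann regular semigroup with pseudo-inverse map s (so x·s(x)·x = x for all x), then the free k-vector space k[S] with linearly extended multiplication, the comultiplication δ(x) = x ⊗ x on basis elements, and the linear extension of s, is a VN-core in the category of k-vector spaces. -/

import Mathlib

open TensorProduct LinearMap

/-- The diagonal comultiplication on a semigroup algebra, `δ(x) = x ⊗ x` on
basis elements. -/
noncomputable def sgComul (k S : Type*) [CommRing k] [Semigroup S] :
    MonoidAlgebra k S →ₗ[k] MonoidAlgebra k S ⊗[k] MonoidAlgebra k S :=
  Finsupp.lift (MonoidAlgebra k S ⊗[k] MonoidAlgebra k S) k S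
    (fun x => MonoidAlgebra.single x (1 : k) ⊗ₜ[k] MonoidAlgebra.single x (1 : k)) ∘ₗ
    (MonoidAlgebra.coeffLinearEquiv k).toLinearMap

/-- The linear extension of a map `s : S → S` to the semigroup algebra. -/
noncomputable def sgExtend (k : Type*) {S : Type*} [CommRing k] (s : S → S) :
    MonoidAlgebra k S →ₗ[k] MonoidAlgebra k S :=
  MonoidAlgebra.mapDomainLinearMap k k s

/-! Each identity is between linear maps out of a tensor power of `k[S]`, so it suffices to check
it on pure tensors of basis elements `x ∈ S`. There `δ` is diagonal and multiplicative, so the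
first three identities hold in every semigroup algebra, and the last one reduces to
`x · s(x) · x = x`. -/

theorem LinearMap.mul'_comp_rTensor_mul' (R A : Type*) [CommSemiring R] [NonUnitalSemiring A]
    [Module R A] [SMulCommClass R A A] [IsScalarTower R A A] :
    mul' R A ∘ₗ (mul' R A).rTensor A =
      mul' R A ∘ₗ (mul' R A).lTensor A ∘ₗ (TensorProduct.assoc R A A A).toLinearMap := by
  ext x y z
  simp [mul_assoc]

section SemigroupAlgebra

variable (k : Type*) {S : Type*} [CommRing k]

theorem sgExtend_single (s : S → S) (x : S) (r : k) :
    sgExtend k s (MonoidAlgebra.single x r) = MonoidAlgebra.single (s x) r :=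
  MonoidAlgebra.mapDomainLinearMap_single ..

variable [Semigroup S]

theorem sgComul_single (x : S) :
    sgComul k S (MonoidAlgebra.single x 1) =
      MonoidAlgebra.single x (1 : k) ⊗ₜ[k] MonoidAlgebra.single x (1 : k) := by
  simp [sgComul]

theorem sgComul_coassoc :
    (TensorProduct.assoc k _ _ _).toLinearMap ∘ₗ (sgComul k S).rTensor (MonoidAlgebra k S) ∘ₗ
        sgComul k S =
      (sgComul k S).lTensor (MonoidAlgebra k S) ∘ₗ sgComul k S := by
  ext x
  simp [sgComul_single]

theorem sgComul_comp_mul' :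
    sgComul k S ∘ₗ mul' k (MonoidAlgebra k S) =
      map (mul' k _) (mul' k _) ∘ₗ (tensorTensorTensorComm k _ _ _ _).toLinearMap ∘ₗ
        map (sgComul k S) (sgComul k S) := by
  ext x y
  simp [sgComul_single]

theorem mul'_comp_sgExtend_comp_sgComul_eq_id (s : S → S) (hs : ∀ x : S, x * s x * x = x) :
    mul' k (MonoidAlgebra k S) ∘ₗ (mul' k (MonoidAlgebra k S)).lTensor (MonoidAlgebra k S) ∘ₗ
        ((sgExtend k s).rTensor (MonoidAlgebra k S)).lTensor (MonoidAlgebra k S) ∘ₗ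
        (sgComul k S).lTensor (MonoidAlgebra k S) ∘ₗ sgComul k S =
      LinearMap.id := by
  ext x
  simp [sgComul_single, sgExtend_single, ← mul_assoc, hs]

end SemigroupAlgebra

/-- if `S` is a Von Neumann regular semigroup with pseudo-inverse
map `s`, then the semigroup algebra `k[S]`, with the linearly extended
multiplication, the comultiplication `δ(x) = x ⊗ x`, and the linear extension of
`s`, is a VN-core: `μ` is associative, `δ` is coassociative, the semibialgebra
axiom holds, and `μ₃(1 ⊗ T ⊗ 1)δ₃ = 1`. -/
theorem semigroupAlgebra_vncore (k : Type*) {S : Type*} [CommRing k] [Semigroup S]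
    (s : S → S) (hs : ∀ x : S, x * s x * x = x) :
    (LinearMap.mul' k (MonoidAlgebra k S)) ∘ₗ
        (LinearMap.mul' k (MonoidAlgebra k S)).rTensor (MonoidAlgebra k S) =
      (LinearMap.mul' k (MonoidAlgebra k S)) ∘ₗ
        (LinearMap.mul' k (MonoidAlgebra k S)).lTensor (MonoidAlgebra k S) ∘ₗ
        (TensorProduct.assoc k (MonoidAlgebra k S) (MonoidAlgebra k S)
          (MonoidAlgebra k S)).toLinearMap ∧
    (TensorProduct.assoc k (MonoidAlgebra k S) (MonoidAlgebra k S)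
          (MonoidAlgebra k S)).toLinearMap ∘ₗ
        (sgComul k S).rTensor (MonoidAlgebra k S) ∘ₗ sgComul k S =
      (sgComul k S).lTensor (MonoidAlgebra k S) ∘ₗ sgComul k S ∧
    sgComul k S ∘ₗ LinearMap.mul' k (MonoidAlgebra k S) =
      TensorProduct.map (LinearMap.mul' k (MonoidAlgebra k S))
          (LinearMap.mul' k (MonoidAlgebra k S)) ∘ₗ
        (TensorProduct.tensorTensorTensorComm k (MonoidAlgebra k S)
          (MonoidAlgebra k S) (MonoidAlgebra k S) (MonoidAlgebra k S)).toLinearMap ∘ₗ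
        TensorProduct.map (sgComul k S) (sgComul k S) ∧
    (LinearMap.mul' k (MonoidAlgebra k S)) ∘ₗ
        (LinearMap.mul' k (MonoidAlgebra k S)).lTensor (MonoidAlgebra k S) ∘ₗ
        ((sgExtend k s).rTensor (MonoidAlgebra k S)).lTensor (MonoidAlgebra k S) ∘ₗ
        (sgComul k S).lTensor (MonoidAlgebra k S) ∘ₗ sgComul k S =
      LinearMap.id := by
  exact ⟨mul'_comp_rTensor_mul' k _, sgComul_coassoc k, sgComul_comp_mul' k,
      mul'_comp_sgExtend_comp_sgComul_eq_id k s hs⟩
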